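/- arXiv:1210.1108 — 2 statements merged into one kernel-verified Lean document; each statement's English description precedes it below -/
import Mathlib

section
/- For every interval I ⊆ ℝ there exists β ∈ {0, 1/3} and an interval K in the shifted dyadic grid 𝒟^β such that I ⊆ K and |K| ≤ 8|I|. -/
/-!
Take the scale `2^j` with `3|I| < 2^j ≤ 6|I|`. Points of the unshifted grid `2^j ℤ` and of the
shifted grid `2^j (ℤ ± 1/3)` are at least `2^j / 3 > |I|` apart, so the interior of `I` cannot
contain endpoints of both grids. A grid with no endpoint inside `I` has an interval of length
`2^j` containing `I`.
-/

lemma exists_zpow_two_mem_Ioc {r : ℝ} (hr : 0 < r) :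
    ∃ j : ℤ, (2:ℝ) ^ j ∈ Set.Ioc r (2 * r) := by
  refine ⟨Int.log 2 r + 1, Int.lt_zpow_succ_log_self (by norm_num) r, ?_⟩
  rw [zpow_add_one₀ two_ne_zero, mul_comm]
  gcongr
  exact Int.zpow_log_le_self (by norm_num) hr

lemma exists_Ico_subset_of_forall_notMem_Ioo {a b c s : ℝ} (hc : 0 < c)
    (h : ∀ m : ℤ, c * (m + s) ∉ Set.Ioo a b) :
    ∃ m : ℤ, Set.Ico a b ⊆ Set.Ico (c * (m + s)) (c * (m + 1 + s)) := by
  set m := ⌊a / c - s⌋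
  have hm_le : c * (m + s) ≤ a := by
    have := Int.floor_le (a / c - s)
    rw [← le_div_iff₀' hc]; linarith
  have hm_lt : a < c * (m + 1 + s) := by
    have := Int.lt_floor_add_one (a / c - s)
    rw [← div_lt_iff₀' hc]; linarith
  have hb : b ≤ c * (m + 1 + s) := by
    by_contra! hb
    exact h (m + 1) ⟨by push_cast; exact hm_lt, by push_cast; exact hb⟩
  exact ⟨m, Set.Ico_subset_Ico hm_le hb⟩

lemma div_three_le_abs_sub_shifted {c : ℝ} (hc : 0 ≤ c) (j m m' : ℤ) :
    c / 3 ≤ |c * m - c * (m' + (-1:ℝ) ^ j * (1/3))| := by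
  have key : ∀ e : ℤ, (e = 1 ∨ e = -1) → c / 3 ≤ |c * m - c * (m' + e * (1/3))| := by
    intro e he
    have hn : (1:ℝ) ≤ |((3 * (m - m') - e : ℤ) : ℝ)| := by
      rw [← Int.cast_abs, ← Int.cast_one, Int.cast_le]
      exact Int.one_le_abs (by omega)
    calc c / 3 = c / 3 * 1 := (mul_one _).symm
      _ ≤ c / 3 * |((3 * (m - m') - e : ℤ) : ℝ)| := by gcongr
      _ = |c * m - c * (m' + e * (1/3))| := by
        rw [← abs_of_nonneg (by positivity : 0 ≤ c / 3), ← abs_mul]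
        congr 1; push_cast; ring
  rcases Int.even_or_odd j with hj | hj
  · simpa [hj.neg_one_zpow] using key 1 (Or.inl rfl)
  · simpa [hj.neg_one_zpow] using key (-1) (Or.inr rfl)

/-- For every interval `I = [a,b) ⊆ ℝ` there exist `β ∈ {0, 1/3}` and an
interval `K = [2^j(m + (-1)^j β), 2^j(m + 1 + (-1)^j β))` of the shifted dyadic grid `𝒟^β`
such that `I ⊆ K` and `|K| = 2^j ≤ 8 |I|`. -/
theorem shifted_dyadic_cover (a b : ℝ) (hab : a < b) :
    ∃ β ∈ ({0, 1/3} : Set ℝ), ∃ j m : ℤ,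
      Set.Ico a b ⊆
        Set.Ico ((2:ℝ)^j * ((m : ℝ) + (-1:ℝ)^j * β)) ((2:ℝ)^j * ((m : ℝ) + 1 + (-1:ℝ)^j * β)) ∧
      (2:ℝ)^j ≤ 8 * (b - a) := by
  obtain ⟨j, hj3, hj6⟩ := exists_zpow_two_mem_Ioc (r := 3 * (b - a)) (by linarith)
  have hc : (0:ℝ) < 2 ^ j := by positivity
  suffices ∃ β ∈ ({0, 1/3} : Set ℝ),
      ∀ m : ℤ, (2:ℝ) ^ j * (m + (-1:ℝ) ^ j * β) ∉ Set.Ioo a b by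
    obtain ⟨β, hβ, h⟩ := this
    obtain ⟨m, hm⟩ := exists_Ico_subset_of_forall_notMem_Ioo hc h
    exact ⟨β, hβ, j, m, hm, by linarith⟩
  by_cases h0 : ∃ m₀ : ℤ, (2:ℝ) ^ j * m₀ ∈ Set.Ioo a b
  · obtain ⟨m₀, hm₀⟩ := h0
    refine ⟨1/3, by simp, fun m hm => ?_⟩
    have hsep := div_three_le_abs_sub_shifted hc.le j m₀ m
    have hclose : |(2:ℝ) ^ j * m₀ - 2 ^ j * (m + (-1:ℝ) ^ j * (1/3))| < b - a :=
      abs_sub_lt_iff.2 ⟨by linarith [hm.1, hm₀.2], by linarith [hm.2, hm₀.1]⟩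
    linarith
  · exact ⟨0, by simp, by simpa using h0⟩
end

section
/- Let α > −1. There is a constant C_α > 0 (depending only on α) such that for all z, ξ in the upper half plane ℋ, the kernel estimate 1/|z − ξ̄|^{2+α} ≤ C_α Σ_{β ∈ {0,1/3}} Σ_{I ∈ 𝒟^β} 1_{Q_I}(z) 1_{Q_I}(ξ) / |I|^{2+α} holds. -/
open MeasureTheory

noncomputable section

/-- The Carleson box `Q_{[a,b)} = [a,b) × (0, b-a]` in the upper half plane. -/
def cbox (a b : ℝ) : Set ℂ := {z | a ≤ z.re ∧ z.re < b ∧ 0 < z.im ∧ z.im ≤ b - a}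

/-- The interval of the shifted dyadic grid `𝒟^β` with parameters `j, m`. -/
def gridbox (β : ℝ) (j m : ℤ) : Set ℂ :=
  cbox ((2:ℝ)^j * ((m : ℝ) + (-1:ℝ)^j * β)) ((2:ℝ)^j * ((m : ℝ) + 1 + (-1:ℝ)^j * β))

/-- The dyadic kernel `K^β_α(z,ξ) = Σ_{I ∈ 𝒟^β} 1_{Q_I}(z) 1_{Q_I}(ξ) / |I|^{2+α}`. -/
def dyadicKernel (α β : ℝ) (z ξ : ℂ) : ℝ :=
  ∑' (j : ℤ) (m : ℤ),
    (gridbox β j m).indicator (fun _ => (1:ℝ)) z * (gridbox β j m).indicator (fun _ => (1:ℝ)) ξ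
      / ((2:ℝ)^j) ^ (2 + α)

/-!
Put `A = ‖z - conj ξ‖`, which dominates both `|Re z - Re ξ|` and `Im z + Im ξ`, and choose the
dyadic scale `2 ^ j ∈ (3A, 6A]`. Both points lie below height `2 ^ j` and their real parts are less
than `2 ^ j / 3` apart. At scale `2 ^ j` every endpoint of `𝒟^0` is at distance at least `2 ^ j / 3`
from every endpoint of `𝒟^{1/3}`, so a segment that short cannot cross an endpoint of both grids
(the one-third trick). Hence some interval `I` of length `2 ^ j` of one of the grids has both
points in `Q_I`, and this box alone contributes `2 ^ (-j(2+α)) ≥ (6A) ^ (-(2+α))` to the kernel.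
-/

lemma mem_gridbox_iff {β : ℝ} {j m : ℤ} {w : ℂ} :
    w ∈ gridbox β j m ↔
      ⌊w.re / (2:ℝ) ^ j - (-1:ℝ) ^ j * β⌋ = m ∧ 0 < w.im ∧ w.im ≤ (2:ℝ) ^ j := by
  have h2 : (0:ℝ) < (2:ℝ) ^ j := by positivity
  have hre : ((2:ℝ) ^ j * (m + (-1:ℝ) ^ j * β) ≤ w.re ∧
        w.re < (2:ℝ) ^ j * (m + 1 + (-1:ℝ) ^ j * β)) ↔
      ⌊w.re / (2:ℝ) ^ j - (-1:ℝ) ^ j * β⌋ = m := by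
    rw [Int.floor_eq_iff, le_sub_iff_add_le, le_div_iff₀ h2, sub_lt_iff_lt_add, div_lt_iff₀ h2]
    constructor <;> rintro ⟨h₁, h₂⟩ <;> constructor <;> linarith
  simp only [gridbox, cbox, Set.mem_ofPred_eq, ← hre]
  constructor
  · rintro ⟨h₁, h₂, h₃, h₄⟩
    exact ⟨⟨h₁, h₂⟩, h₃, by linarith⟩
  · rintro ⟨⟨h₁, h₂⟩, h₃, h₄⟩
    exact ⟨h₁, h₂, h₃, by linarith⟩

/-- Otherwise the half-open segment between `x` and `y` contains both an integer `n` and a point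
`k + t` with `k` an integer, whence `|n - k - t| < |x - y|`. -/
lemma Int.floor_eq_or_floor_sub_eq {x y t : ℝ} (h : ∀ k : ℤ, |x - y| < |k - t|) :
    ⌊x⌋ = ⌊y⌋ ∨ ⌊x - t⌋ = ⌊y - t⌋ := by
  wlog hxy : x ≤ y generalizing x y
  · rcases this (fun k => abs_sub_comm x y ▸ h k) (le_of_not_ge hxy) with h' | h'
    exacts [.inl h'.symm, .inr h'.symm]
  by_contra! ⟨hne, hne'⟩
  have hn : x < ⌊y⌋ := Int.floor_lt.1 ((Int.floor_le_floor hxy).lt_of_ne hne)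
  have hk : x - t < ⌊y - t⌋ := Int.floor_lt.1 ((Int.floor_le_floor (by linarith)).lt_of_ne hne')
  have hclose : |((⌊y⌋ - ⌊y - t⌋ : ℤ) : ℝ) - t| < |x - y| := by
    rw [abs_sub_comm x y, abs_of_nonneg (sub_nonneg.2 hxy), abs_sub_lt_iff]
    push_cast
    constructor <;> linarith [Int.floor_le y, Int.floor_le (y - t)]
  exact (h _).not_gt hclose

lemma one_third_le_abs_intCast_sub (k j : ℤ) : 1 / 3 ≤ |(k : ℝ) - (-1) ^ j * (1 / 3)| := by
  have hk : (k : ℝ) ≤ -1 ∨ (k : ℝ) = 0 ∨ (1 : ℝ) ≤ k := by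
    rcases (by omega : k ≤ -1 ∨ k = 0 ∨ 1 ≤ k) with hk | hk | hk
    exacts [.inl (by exact_mod_cast hk), .inr (.inl (by exact_mod_cast hk)),
      .inr (.inr (by exact_mod_cast hk))]
  rcases Int.even_or_odd j with hj | hj <;> rw [hj.neg_one_zpow, le_abs] <;>
    rcases hk with hk | hk | hk
  all_goals first | (left; linarith) | (right; linarith)

lemma exists_gridbox_mem_of_abs_re_sub_lt {z ξ : ℂ} (j : ℤ) (hz : 0 < z.im) (hξ : 0 < ξ.im)
    (hz' : z.im ≤ (2:ℝ) ^ j) (hξ' : ξ.im ≤ (2:ℝ) ^ j) (hre : |z.re - ξ.re| < (2:ℝ) ^ j / 3) :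
    ∃ β ∈ ({0, 1 / 3} : Set ℝ), ∃ m, z ∈ gridbox β j m ∧ ξ ∈ gridbox β j m := by
  have h2 : (0:ℝ) < 2 ^ j := zpow_pos two_pos j
  have hclose : |z.re / (2:ℝ) ^ j - ξ.re / (2:ℝ) ^ j| < 1 / 3 := by
    rw [← sub_div, abs_div, abs_of_pos h2, div_lt_iff₀ h2]
    linarith
  simp only [mem_gridbox_iff]
  rcases Int.floor_eq_or_floor_sub_eq
      (fun k => hclose.trans_le (one_third_le_abs_intCast_sub k j)) with h | h
  · exact ⟨0, by simp, ⌊z.re / (2:ℝ) ^ j⌋, ⟨by simp, hz, hz'⟩, by simp [h], hξ, hξ'⟩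
  · exact ⟨1 / 3, by simp, _, ⟨rfl, hz, hz'⟩, h.symm, hξ, hξ'⟩

lemma summable_int_of_nonneg_of_le_zpow {f : ℤ → ℝ} {r : ℝ} (j₀ : ℤ) (hr₀ : 0 ≤ r) (hr₁ : r < 1)
    (hf : ∀ j, 0 ≤ f j) (hle : ∀ j, f j ≤ r ^ j) (hzero : ∀ j < j₀, f j = 0) : Summable f := by
  refine summable_int_iff_summable_nat_and_neg.2 ⟨?_, ?_⟩
  · exact .of_nonneg_of_le (fun n => hf n) (fun n => by simpa using hle n)
      (summable_geometric_of_lt_one hr₀ hr₁)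
  · refine summable_of_ne_finset_zero (s := Finset.range ((-j₀).toNat + 1)) fun n hn => ?_
    exact hzero _ (by simp only [Finset.mem_range] at hn; omega)

def dyadicTerm (α β : ℝ) (z ξ : ℂ) (j m : ℤ) : ℝ :=
  (gridbox β j m).indicator (fun _ => (1:ℝ)) z * (gridbox β j m).indicator (fun _ => (1:ℝ)) ξ
    / ((2:ℝ) ^ j) ^ (2 + α)

section DyadicTerm

variable {α β : ℝ} {z ξ : ℂ} {j m : ℤ}

lemma dyadicTerm_nonneg : 0 ≤ dyadicTerm α β z ξ j m :=
  div_nonneg (mul_nonneg (Set.indicator_nonneg (by simp) _) (Set.indicator_nonneg (by simp) _))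
    (by positivity)

lemma dyadicTerm_le : dyadicTerm α β z ξ j m ≤ 1 / ((2:ℝ) ^ j) ^ (2 + α) := by
  refine div_le_div_of_nonneg_right ?_ (by positivity)
  exact mul_le_one₀ (Set.indicator_le_self' (by simp) _) (Set.indicator_nonneg (by simp) _)
    (Set.indicator_le_self' (by simp) _)

lemma dyadicTerm_of_mem (hz : z ∈ gridbox β j m) (hξ : ξ ∈ gridbox β j m) :
    dyadicTerm α β z ξ j m = 1 / ((2:ℝ) ^ j) ^ (2 + α) := by
  simp [dyadicTerm, hz, hξ]

lemma dyadicTerm_of_notMem (hz : z ∉ gridbox β j m) : dyadicTerm α β z ξ j m = 0 := by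
  simp [dyadicTerm, hz]

lemma tsum_dyadicTerm :
    ∑' m, dyadicTerm α β z ξ j m = dyadicTerm α β z ξ j ⌊z.re / (2:ℝ) ^ j - (-1:ℝ) ^ j * β⌋ :=
  tsum_eq_single _ fun _ hm => dyadicTerm_of_notMem fun h => hm (mem_gridbox_iff.1 h).1.symm

lemma summable_tsum_dyadicTerm (hs : 0 < 2 + α) (hz : 0 < z.im) :
    Summable fun j => ∑' m, dyadicTerm α β z ξ j m := by
  obtain ⟨j₀, hj₀, -⟩ := exists_mem_Ico_zpow hz one_lt_two
  refine summable_int_of_nonneg_of_le_zpow j₀ (r := ((2:ℝ) ^ (2 + α))⁻¹) (by positivity)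
    (inv_lt_one_of_one_lt₀ (Real.one_lt_rpow one_lt_two hs))
    (fun _ => tsum_nonneg fun _ => dyadicTerm_nonneg) (fun j => ?_) (fun j hj => ?_)
  · rw [inv_zpow, Real.rpow_zpow_comm zero_le_two, ← one_div]
    exact tsum_dyadicTerm.trans_le dyadicTerm_le
  · refine tsum_dyadicTerm.trans (dyadicTerm_of_notMem fun h => ?_)
    exact (zpow_lt_zpow_right₀ one_lt_two hj).not_ge (hj₀.trans (mem_gridbox_iff.1 h).2.2)

end DyadicTerm

lemma dyadicKernel_nonneg (α β : ℝ) (z ξ : ℂ) : 0 ≤ dyadicKernel α β z ξ :=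
  tsum_nonneg fun _ => tsum_nonneg fun _ => dyadicTerm_nonneg

lemma one_div_le_dyadicKernel {α β : ℝ} {z ξ : ℂ} {j m : ℤ} (hs : 0 < 2 + α)
    (hz : z ∈ gridbox β j m) (hξ : ξ ∈ gridbox β j m) :
    1 / ((2:ℝ) ^ j) ^ (2 + α) ≤ dyadicKernel α β z ξ := by
  calc 1 / ((2:ℝ) ^ j) ^ (2 + α) = ∑' m, dyadicTerm α β z ξ j m := by
        rw [tsum_dyadicTerm, (mem_gridbox_iff.1 hz).1, dyadicTerm_of_mem hz hξ]
    _ ≤ dyadicKernel α β z ξ :=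
        (summable_tsum_dyadicTerm hs (mem_gridbox_iff.1 hz).2.1).le_tsum j
          fun _ _ => tsum_nonneg fun _ => dyadicTerm_nonneg

/-- the Bergman kernel is dominated by the two dyadic kernels. -/
theorem kernel_dominated_by_dyadic (α : ℝ) (hα : -1 < α) :
    ∃ C > 0, ∀ z ξ : ℂ, 0 < z.im → 0 < ξ.im →
      1 / ‖z - (starRingEnd ℂ) ξ‖ ^ (2 + α) ≤
        C * (dyadicKernel α 0 z ξ + dyadicKernel α (1/3) z ξ) := by
  have hs : 0 < 2 + α := by linarith
  refine ⟨6 ^ (2 + α), by positivity, fun z ξ hz hξ => ?_⟩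
  set A := ‖z - (starRingEnd ℂ) ξ‖
  have hre : |z.re - ξ.re| ≤ A := by simpa using Complex.abs_re_le_norm (z - (starRingEnd ℂ) ξ)
  have him : z.im + ξ.im ≤ A := by
    simpa [abs_of_pos (add_pos hz hξ)] using Complex.abs_im_le_norm (z - (starRingEnd ℂ) ξ)
  have hA : 0 < A := by linarith
  obtain ⟨n, hn, hn'⟩ := exists_mem_Ico_zpow (by linarith : 0 < 3 * A) one_lt_two
  have hscale : (2:ℝ) ^ (n + 1) ≤ 6 * A := by rw [zpow_add_one₀ two_ne_zero]; linarith
  obtain ⟨β, hβ, m, hzm, hξm⟩ :=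
    exists_gridbox_mem_of_abs_re_sub_lt (n + 1) hz hξ (by linarith) (by linarith) (by linarith)
  calc 1 / A ^ (2 + α) ≤ 6 ^ (2 + α) * (1 / ((2:ℝ) ^ (n + 1)) ^ (2 + α)) := by
        rw [mul_one_div, div_le_div_iff₀ (Real.rpow_pos_of_pos hA _) (by positivity), one_mul,
          ← Real.mul_rpow (by norm_num) hA.le]
        exact Real.rpow_le_rpow (by positivity) hscale hs.le
    _ ≤ 6 ^ (2 + α) * dyadicKernel α β z ξ := by gcongr; exact one_div_le_dyadicKernel hs hzm hξm
    _ ≤ 6 ^ (2 + α) * (dyadicKernel α 0 z ξ + dyadicKernel α (1/3) z ξ) := by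
        rcases hβ with rfl | rfl
        · gcongr; linarith [dyadicKernel_nonneg α (1/3) z ξ]
        · gcongr; linarith [dyadicKernel_nonneg α 0 z ξ]
end
end
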